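/- arXiv:1210.6420 — 6 statements merged into one kernel-verified Lean document; each statement's English description precedes it below -/
import Mathlib

section
/- Let 𝔄 be a special sheaf of unital C*-algebras over X, and let U, V be open subsets of X with the closure of V contained in U. Then for every a ∈ 𝔄(U) there exists a' ∈ 𝔄(X) with a'|_V = a|_V and ‖a'‖ ≤ ‖a‖. -/
open TopologicalSpace BoundedContinuousFunction

/-- Sections of a special sheaf of unital C*-algebras can be extended from an open set `U`
to all of `X`, up to restriction to an open set `V` with closure contained in `U`, without
increasing the norm.

The hypotheses bundle the data of a presheaf of unital C*-algebras `A` over `X` (with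
restriction star-homomorphisms `res`), the sheaf axioms (vanishing on `∅`, uniqueness and
bounded gluing for open covers), and the *special* structure: a compatible unital module
action of the ring `C_b(U)` of bounded continuous functions on each `A U`. -/
theorem special_sheaf_extension
    {X : Type} [TopologicalSpace X] [LocallyCompactSpace X] [MetrizableSpace X]
    (A : Opens X → Type)
    [∀ U, NormedRing (A U)] [∀ U, StarRing (A U)] [∀ U, CStarRing (A U)]
    [∀ U, NormedAlgebra ℂ (A U)] [∀ U, CompleteSpace (A U)] [∀ U, StarModule ℂ (A U)]
    -- presheaf structure
    (res : ∀ {U V : Opens X}, U ≤ V → A V →⋆ₐ[ℂ] A U)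
    (res_id : ∀ (U : Opens X) (a : A U), res (le_refl U) a = a)
    (res_comp : ∀ {U V W : Opens X} (hUV : U ≤ V) (hVW : V ≤ W) (a : A W),
      res hUV (res hVW a) = res (hUV.trans hVW) a)
    -- sheaf axioms
    (h_empty : ∀ a : A ⊥, a = 0)
    (h_unique : ∀ {ι : Type} (𝒰 : ι → Opens X) (a : A (⨆ i, 𝒰 i)),
      (∀ i, res (le_iSup 𝒰 i) a = 0) → a = 0)
    (h_glue : ∀ {ι : Type} (𝒰 : ι → Opens X) (a : ∀ i, A (𝒰 i)) (M : ℝ),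
      (∀ i, ‖a i‖ ≤ M) →
      (∀ i j, res (inf_le_left : 𝒰 i ⊓ 𝒰 j ≤ 𝒰 i) (a i)
            = res (inf_le_right : 𝒰 i ⊓ 𝒰 j ≤ 𝒰 j) (a j)) →
      ∃ b : A (⨆ i, 𝒰 i), (∀ i, res (le_iSup 𝒰 i) b = a i) ∧ ‖b‖ ≤ M)
    -- special structure: module action of C_b(U) on A U
    (act : ∀ U : Opens X, (↥U →ᵇ ℂ) → A U → A U)
    (act_one : ∀ (U : Opens X) (a : A U), act U 1 a = a)
    (act_mul : ∀ (U : Opens X) (f g : ↥U →ᵇ ℂ) (a : A U),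
      act U (f * g) a = act U f (act U g a))
    (act_add : ∀ (U : Opens X) (f : ↥U →ᵇ ℂ) (a b : A U),
      act U f (a + b) = act U f a + act U f b)
    (add_act : ∀ (U : Opens X) (f g : ↥U →ᵇ ℂ) (a : A U),
      act U (f + g) a = act U f a + act U g a)
    (act_mul_left : ∀ (U : Opens X) (f : ↥U →ᵇ ℂ) (a b : A U),
      act U f (a * b) = (act U f a) * b)
    (act_mul_right : ∀ (U : Opens X) (f : ↥U →ᵇ ℂ) (a b : A U),
      act U f (a * b) = a * act U f b)
    (act_star : ∀ (U : Opens X) (f : ↥U →ᵇ ℂ) (a : A U),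
      star (act U f a) = act U (star f) (star a))
    (act_norm : ∀ (U : Opens X) (f : ↥U →ᵇ ℂ) (a : A U), ‖act U f a‖ ≤ ‖f‖ * ‖a‖)
    (act_res : ∀ {U V : Opens X} (h : V ≤ U) (f : ↥U →ᵇ ℂ) (a : A U),
      res h (act U f a)
        = act V (f.compContinuous ⟨Set.inclusion h, continuous_inclusion h⟩) (res h a))
    -- the statement
    (U V : Opens X) (hVU : closure (V : Set X) ⊆ (U : Set X)) (a : A U) :
    ∃ a' : A ⊤, res (le_top : V ≤ ⊤) a'
        = res (show V ≤ U from fun _ hx => hVU (subset_closure hx)) a ∧ ‖a'‖ ≤ ‖a‖ := by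
  haveI : NormalSpace X := by
    letI := TopologicalSpace.metrizableSpaceMetric X
    infer_instance
  -- shrink: an open V' with closure V ⊆ V' and closure V' ⊆ U
  obtain ⟨V', hV'open, hVV', hV'U⟩ :=
    normal_exists_closure_subset isClosed_closure U.isOpen hVU
  -- Urysohn function: 1 on closure V, 0 off V'
  obtain ⟨f, hf0, hf1, hf01⟩ :=
    exists_continuous_zero_one_of_isClosed (hV'open.isClosed_compl) isClosed_closure
      (by simpa [Set.disjoint_compl_left_iff_subset] using hVV')
  -- the function g on U
  let g : ↥U →ᵇ ℂ := BoundedContinuousFunction.mkOfBound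
    ⟨fun x => (f x.1 : ℂ), Complex.continuous_ofReal.comp (f.continuous.comp continuous_subtype_val)⟩ 1 (by
      intro x y
      simp only [ContinuousMap.coe_mk, Complex.dist_eq]
      rw [show ((f x.1 : ℂ) - (f y.1 : ℂ)) = ((f x.1 - f y.1 : ℝ) : ℂ) by push_cast; ring]
      rw [Complex.norm_real, Real.norm_eq_abs]
      have hx := hf01 x.1; have hy := hf01 y.1
      rw [abs_sub_le_iff]; constructor <;> [skip; skip] <;> simp at hx hy ⊢ <;> linarith)
  have hgnorm : ‖g‖ ≤ 1 := by
    refine (BoundedContinuousFunction.norm_le zero_le_one).mpr fun x => ?_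
    have hx := hf01 x.1
    show ‖((f x.1 : ℝ) : ℂ)‖ ≤ 1
    rw [Complex.norm_real, Real.norm_eq_abs, abs_le]
    simp at hx; constructor <;> linarith
  have h_act_zero : ∀ (T : Opens X) (b : A T), act T 0 b = 0 := fun T b =>
    norm_le_zero_iff.mp (by simpa using act_norm T 0 b)
  -- the cover
  let W : Opens X := ⟨(closure (V' : Set X))ᶜ, isClosed_closure.isOpen_compl⟩
  let 𝒰 : Bool → Opens X := fun i => cond i U W
  let sec : ∀ i, A (𝒰 i) := fun i => Bool.rec (0 : A W) (act U g a) i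
  have hnorm : ∀ i, ‖sec i‖ ≤ ‖a‖ := by
    intro i; cases i
    · simpa [sec] using norm_nonneg a
    · calc ‖act U g a‖ ≤ ‖g‖ * ‖a‖ := act_norm U g a
        _ ≤ 1 * ‖a‖ := by gcongr
        _ = ‖a‖ := one_mul _
  -- the restriction of g to anything inside W vanishes
  have hgW : ∀ (T : Opens X) (h : T ≤ U) (hTW : (T : Set X) ⊆ (W : Set X)),
      res h (act U g a) = 0 := by
    intro T h hTW
    rw [act_res]
    have : (g.compContinuous ⟨Set.inclusion h, continuous_inclusion h⟩ : ↥T →ᵇ ℂ) = 0 := by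
      ext x
      have hx : x.1 ∉ (V' : Set X) := fun hm => hTW x.2 (subset_closure hm)
      simp only [BoundedContinuousFunction.coe_zero, Pi.zero_apply,
        BoundedContinuousFunction.compContinuous_apply]
      have : f x.1 = 0 := hf0 hx
      simp [g, Set.inclusion, this]
    rw [this, h_act_zero]
  have hcompat : ∀ i j, res (inf_le_left : 𝒰 i ⊓ 𝒰 j ≤ 𝒰 i) (sec i)
      = res (inf_le_right : 𝒰 i ⊓ 𝒰 j ≤ 𝒰 j) (sec j) := by
    intro i j
    cases i <;> cases j
    · rfl
    · show res _ (0 : A W) = res _ (act U g a)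
      rw [map_zero, hgW (𝒰 false ⊓ 𝒰 true) inf_le_right (fun x hx => hx.1)]
    · show res _ (act U g a) = res _ (0 : A W)
      rw [map_zero, hgW (𝒰 true ⊓ 𝒰 false) inf_le_left (fun x hx => hx.2)]
    · rfl
  obtain ⟨b, hb, hbnorm⟩ := h_glue 𝒰 sec ‖a‖ hnorm hcompat
  have hsup : (⨆ i, 𝒰 i) = ⊤ := by
    refine le_antisymm le_top fun x _ => ?_
    show x ∈ ⨆ i, 𝒰 i
    rw [Opens.mem_iSup]
    by_cases hx : x ∈ closure (V' : Set X)
    · exact ⟨true, hV'U hx⟩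
    · exact ⟨false, hx⟩
  letI : CStarAlgebra (A ⊤) := {}
  letI : CStarAlgebra (A (⨆ i, 𝒰 i)) := {}
  letI : CStarAlgebra (A U) := {}
  refine ⟨res hsup.ge b, ?_, ?_⟩
  · have h1 : res (le_top : V ≤ ⊤) (res hsup.ge b)
        = res (le_trans le_top hsup.ge) b := res_comp _ _ b
    have h2 : res (show V ≤ U from fun _ hx => hVU (subset_closure hx))
          (res (le_iSup 𝒰 true) b)
        = res (le_trans (show V ≤ U from fun _ hx => hVU (subset_closure hx))
            (le_iSup 𝒰 true)) b := res_comp _ _ b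
    rw [h1, show (le_trans (le_top : V ≤ ⊤) hsup.ge)
        = le_trans (show V ≤ U from fun _ hx => hVU (subset_closure hx)) (le_iSup 𝒰 true)
        from rfl, ← h2, hb true]
    show res _ (act U g a) = res _ a
    rw [act_res]
    have hV : V ≤ U := fun _ hx => hVU (subset_closure hx)
    have : (g.compContinuous ⟨Set.inclusion hV, continuous_inclusion hV⟩ : ↥V →ᵇ ℂ) = 1 := by
      ext x
      have : f x.1 = 1 := hf1 (subset_closure x.2)
      simp [g, Set.inclusion, this]
    rw [this, act_one]
  · exact le_trans (NonUnitalStarAlgHom.norm_apply_le (res hsup.ge) b) hbnorm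
end

section
/- Let 𝔄 be a special sheaf of unital C*-algebras over X (local convexity). Let φ_1, …, φ_n : X → [0,1] be continuous functions with φ_1 + ⋯ + φ_n = 1, and let a_1, …, a_n ∈ 𝔄(X). Then ‖φ_1·a_1 + ⋯ + φ_n·a_n‖ ≤ max_{1 ≤ i ≤ n} ‖a_i‖. -/
open TopologicalSpace BoundedContinuousFunction

/-- Local convexity of a special sheaf of unital C*-algebras: if `φ_0, …, φ_n` is a finite
continuous partition of unity on `X` (each `φ_i` takes values in `[0,1]` and they sum to `1`)
and `a_0, …, a_n` are global sections, then `‖∑ φ_i · a_i‖ ≤ max_i ‖a_i‖`.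

The hypotheses bundle the data of a presheaf of unital C*-algebras `A` over `X` (with
restriction star-homomorphisms `res`), the sheaf axioms, and the *special* structure:
a compatible unital module action of `C_b(U)` on each `A U`. -/
theorem special_sheaf_local_convexity
    {X : Type} [TopologicalSpace X] [LocallyCompactSpace X] [MetrizableSpace X]
    (A : Opens X → Type)
    [∀ U, NormedRing (A U)] [∀ U, StarRing (A U)] [∀ U, CStarRing (A U)]
    [∀ U, NormedAlgebra ℂ (A U)] [∀ U, CompleteSpace (A U)] [∀ U, StarModule ℂ (A U)]
    -- presheaf structure
    (res : ∀ {U V : Opens X}, U ≤ V → A V →⋆ₐ[ℂ] A U)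
    (res_id : ∀ (U : Opens X) (a : A U), res (le_refl U) a = a)
    (res_comp : ∀ {U V W : Opens X} (hUV : U ≤ V) (hVW : V ≤ W) (a : A W),
      res hUV (res hVW a) = res (hUV.trans hVW) a)
    -- sheaf axioms
    (h_empty : ∀ a : A ⊥, a = 0)
    (h_unique : ∀ {ι : Type} (𝒰 : ι → Opens X) (a : A (⨆ i, 𝒰 i)),
      (∀ i, res (le_iSup 𝒰 i) a = 0) → a = 0)
    (h_glue : ∀ {ι : Type} (𝒰 : ι → Opens X) (a : ∀ i, A (𝒰 i)) (M : ℝ),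
      (∀ i, ‖a i‖ ≤ M) →
      (∀ i j, res (inf_le_left : 𝒰 i ⊓ 𝒰 j ≤ 𝒰 i) (a i)
            = res (inf_le_right : 𝒰 i ⊓ 𝒰 j ≤ 𝒰 j) (a j)) →
      ∃ b : A (⨆ i, 𝒰 i), (∀ i, res (le_iSup 𝒰 i) b = a i) ∧ ‖b‖ ≤ M)
    -- special structure: module action of C_b(U) on A U
    (act : ∀ U : Opens X, (↥U →ᵇ ℂ) → A U → A U)
    (act_one : ∀ (U : Opens X) (a : A U), act U 1 a = a)
    (act_mul : ∀ (U : Opens X) (f g : ↥U →ᵇ ℂ) (a : A U),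
      act U (f * g) a = act U f (act U g a))
    (act_add : ∀ (U : Opens X) (f : ↥U →ᵇ ℂ) (a b : A U),
      act U f (a + b) = act U f a + act U f b)
    (add_act : ∀ (U : Opens X) (f g : ↥U →ᵇ ℂ) (a : A U),
      act U (f + g) a = act U f a + act U g a)
    (act_mul_left : ∀ (U : Opens X) (f : ↥U →ᵇ ℂ) (a b : A U),
      act U f (a * b) = (act U f a) * b)
    (act_mul_right : ∀ (U : Opens X) (f : ↥U →ᵇ ℂ) (a b : A U),
      act U f (a * b) = a * act U f b)
    (act_star : ∀ (U : Opens X) (f : ↥U →ᵇ ℂ) (a : A U),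
      star (act U f a) = act U (star f) (star a))
    (act_norm : ∀ (U : Opens X) (f : ↥U →ᵇ ℂ) (a : A U), ‖act U f a‖ ≤ ‖f‖ * ‖a‖)
    (act_res : ∀ {U V : Opens X} (h : V ≤ U) (f : ↥U →ᵇ ℂ) (a : A U),
      res h (act U f a)
        = act V (f.compContinuous ⟨Set.inclusion h, continuous_inclusion h⟩) (res h a))
    -- the statement
    (n : ℕ) (φ : Fin (n + 1) → (↥(⊤ : Opens X) →ᵇ ℂ))
    (hφ01 : ∀ (i : Fin (n + 1)) (x : ↥(⊤ : Opens X)),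
      ∃ t : ℝ, 0 ≤ t ∧ t ≤ 1 ∧ φ i x = (t : ℂ))
    (hφsum : ∑ i, φ i = 1)
    (a : Fin (n + 1) → A ⊤) :
    ‖∑ i, act ⊤ (φ i) (a i)‖ ≤ Finset.univ.sup' Finset.univ_nonempty (fun i => ‖a i‖) := by
  classical
  letI instC : ∀ U, CStarAlgebra (A U) := fun U =>
    { (inferInstance : NormedRing (A U)), (inferInstance : StarRing (A U)),
      (inferInstance : CStarRing (A U)), (inferInstance : NormedAlgebra ℂ (A U)),
      (inferInstance : CompleteSpace (A U)), (inferInstance : StarModule ℂ (A U)) with }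
  set M := Finset.univ.sup' Finset.univ_nonempty (fun i => ‖a i‖) with hM
  have hMa : ∀ i, ‖a i‖ ≤ M := fun i => hM ▸ Finset.le_sup' (fun i => ‖a i‖) (Finset.mem_univ i)
  have hM0 : 0 ≤ M := le_trans (norm_nonneg _) (hMa 0)
  have res_norm : ∀ {U V : Opens X} (h : U ≤ V) (c : A V), ‖res h c‖ ≤ ‖c‖ :=
    fun h c => NonUnitalStarAlgHom.norm_apply_le (res h) c
  set b := ∑ i, act ⊤ (φ i) (a i) with hb
  refine le_of_forall_pos_le_add (fun ε hε => ?_)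
  set ε' := ε / ((n + 1) * (M + 1)) with hε'
  have hden : (0:ℝ) < (n + 1) * (M + 1) := by positivity
  have hε'pos : 0 < ε' := by positivity
  -- continuity of the evaluation maps
  have hcont : ∀ i : Fin (n + 1), Continuous fun y : X => φ i ⟨y, trivial⟩ :=
    fun i => (φ i).continuous.comp (Continuous.subtype_mk continuous_id _)
  -- the cover
  set 𝒰 : X → Opens X := fun x =>
    ⟨{y : X | ∀ i, ‖φ i ⟨y, trivial⟩ - φ i ⟨x, trivial⟩‖ < ε'}, by
      have : {y : X | ∀ i, ‖φ i ⟨y, trivial⟩ - φ i ⟨x, trivial⟩‖ < ε'}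
          = ⋂ i, {y : X | ‖φ i ⟨y, trivial⟩ - φ i ⟨x, trivial⟩‖ < ε'} := by
        ext y; simp [Set.mem_iInter]
      rw [this]
      exact isOpen_iInter_of_finite fun i =>
        isOpen_lt (((hcont i).sub continuous_const).norm) continuous_const⟩ with h𝒰
  have hmem : ∀ x : X, x ∈ 𝒰 x := fun x i => by simp [hε'pos]
  -- the key local estimate
  have key : ∀ x : X, ‖res (le_top : 𝒰 x ≤ ⊤) b‖ ≤ M + ε := by
    intro x
    set U := 𝒰 x
    set ρ : (↥(⊤ : Opens X) →ᵇ ℂ) → (↥U →ᵇ ℂ) := fun f =>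
      f.compContinuous ⟨Set.inclusion le_top, continuous_inclusion le_top⟩ with hρ
    set l : Fin (n + 1) → ℝ := fun i => (φ i ⟨x, trivial⟩).re with hl
    have hlval : ∀ i, (l i : ℂ) = φ i ⟨x, trivial⟩ := by
      intro i
      obtain ⟨t, ht0, ht1, hteq⟩ := hφ01 i ⟨x, trivial⟩
      rw [hl]; simp only [hteq, Complex.ofReal_re]
    have hl0 : ∀ i, 0 ≤ l i := by
      intro i
      obtain ⟨t, ht0, ht1, hteq⟩ := hφ01 i ⟨x, trivial⟩
      rw [hl]; simp only [hteq, Complex.ofReal_re]; exact ht0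
    have hlsum : ∑ i, l i = 1 := by
      have h1 : (∑ i, φ i) ⟨x, trivial⟩ = (1 : ↥(⊤:Opens X) →ᵇ ℂ) ⟨x, trivial⟩ := by
        rw [hφsum]
      have h2 : ∑ i, φ i ⟨x, trivial⟩ = (1 : ℂ) := by
        simpa using h1
      have := congrArg Complex.re h2
      simpa [Complex.re_sum] using this
    have hres : res (le_top : U ≤ ⊤) b
        = (∑ i, act U ((l i : ℂ) • 1) (res le_top (a i)))
          + ∑ i, act U (ρ (φ i) - (l i : ℂ) • 1) (res le_top (a i)) := by
      rw [hb, map_sum, ← Finset.sum_add_distrib]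
      refine Finset.sum_congr rfl fun i _ => ?_
      rw [act_res le_top (φ i) (a i), ← add_act]
      congr 1
      rw [add_sub_cancel]
    have herr : ∀ i, ‖ρ (φ i) - (l i : ℂ) • 1‖ ≤ ε' := by
      intro i
      refine (BoundedContinuousFunction.norm_le hε'pos.le).mpr fun y => ?_
      have hy := y.2 i
      simp only [BoundedContinuousFunction.coe_sub, Pi.sub_apply, hρ,
        BoundedContinuousFunction.compContinuous_apply,
        BoundedContinuousFunction.coe_smul, Pi.smul_apply,
        BoundedContinuousFunction.coe_one, Pi.one_apply, smul_eq_mul, mul_one]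
      rw [hlval i]
      exact le_of_lt hy
    have hone : ‖(1 : ↥U →ᵇ ℂ)‖ ≤ 1 :=
      (BoundedContinuousFunction.norm_le zero_le_one).mpr fun y => by simp
    have bound1 : ‖∑ i, act U ((l i : ℂ) • 1) (res le_top (a i))‖ ≤ M := by
      calc ‖∑ i, act U ((l i : ℂ) • 1) (res le_top (a i))‖
          ≤ ∑ i, ‖act U ((l i : ℂ) • 1) (res le_top (a i))‖ := norm_sum_le _ _
        _ ≤ ∑ i, l i * M := by
            refine Finset.sum_le_sum fun i _ => ?_
            calc ‖act U ((l i : ℂ) • 1) (res le_top (a i))‖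
                ≤ ‖(l i : ℂ) • (1 : ↥U →ᵇ ℂ)‖ * ‖res le_top (a i)‖ := act_norm _ _ _
              _ ≤ l i * M := by
                  have h3 : ‖(l i : ℂ) • (1 : ↥U →ᵇ ℂ)‖ ≤ l i := by
                    rw [norm_smul]
                    calc ‖(l i : ℂ)‖ * ‖(1 : ↥U →ᵇ ℂ)‖ ≤ ‖(l i : ℂ)‖ * 1 :=
                          mul_le_mul_of_nonneg_left hone (norm_nonneg _)
                      _ = l i := by rw [mul_one, Complex.norm_real,
                          Real.norm_of_nonneg (hl0 i)]
                  exact mul_le_mul h3 ((res_norm _ _).trans (hMa i)) (norm_nonneg _)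
                    (hl0 i)
        _ = M := by rw [← Finset.sum_mul, hlsum, one_mul]
    have bound2 : ‖∑ i, act U (ρ (φ i) - (l i : ℂ) • 1) (res le_top (a i))‖ ≤ ε := by
      calc ‖∑ i, act U (ρ (φ i) - (l i : ℂ) • 1) (res le_top (a i))‖
          ≤ ∑ i, ‖act U (ρ (φ i) - (l i : ℂ) • 1) (res le_top (a i))‖ := norm_sum_le _ _
        _ ≤ ∑ _i : Fin (n + 1), ε' * M := by
            refine Finset.sum_le_sum fun i _ => ?_
            calc ‖act U (ρ (φ i) - (l i : ℂ) • 1) (res le_top (a i))‖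
                ≤ ‖ρ (φ i) - (l i : ℂ) • 1‖ * ‖res le_top (a i)‖ := act_norm _ _ _
              _ ≤ ε' * M := mul_le_mul (herr i) ((res_norm _ _).trans (hMa i))
                  (norm_nonneg _) hε'pos.le
        _ = (n + 1 : ℝ) * (ε' * M) := by
            rw [Finset.sum_const, Finset.card_univ, Fintype.card_fin, nsmul_eq_mul]
            push_cast; ring
        _ ≤ ε := by
            have hn1 : ((n : ℝ) + 1) ≠ 0 := by positivity
            have hM1 : (M : ℝ) + 1 ≠ 0 := by positivity
            have h2 : (n + 1 : ℝ) * (ε' * M) ≤ (n + 1 : ℝ) * (ε' * (M + 1)) := by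
              have hn0 : (0:ℝ) ≤ (n : ℝ) + 1 := by positivity
              nlinarith [hε'pos.le]
            have h3 : (n + 1 : ℝ) * (ε' * (M + 1)) = ε := by
              rw [hε']; field_simp
            linarith
    calc ‖res (le_top : U ≤ ⊤) b‖
        ≤ ‖∑ i, act U ((l i : ℂ) • 1) (res le_top (a i))‖
          + ‖∑ i, act U (ρ (φ i) - (l i : ℂ) • 1) (res le_top (a i))‖ := by
          rw [hres]; exact norm_add_le _ _
      _ ≤ M + ε := add_le_add bound1 bound2
  -- glue
  obtain ⟨b', hb', hb'norm⟩ := h_glue 𝒰 (fun x => res (le_top : 𝒰 x ≤ ⊤) b) (M + ε) key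
    (fun i j => by rw [res_comp, res_comp])
  have hTS : (⊤ : Opens X) ≤ ⨆ x, 𝒰 x := by
    intro y _
    exact Opens.mem_iSup.mpr ⟨y, hmem y⟩
  have hcb : res (le_top : (⨆ x, 𝒰 x) ≤ ⊤) b = b' := by
    have hz : res (le_top : (⨆ x, 𝒰 x) ≤ ⊤) b - b' = 0 := by
      refine h_unique 𝒰 _ fun x => ?_
      rw [map_sub, res_comp, hb' x, sub_self]
    exact sub_eq_zero.mp hz
  have hfin : b = res hTS b' := by
    rw [← hcb, res_comp]
    exact (res_id ⊤ b).symm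
  rw [hfin]
  exact (res_norm _ _).trans hb'norm
end

section
/- Let X be a locally compact metrizable topological space and H an X-module. For open subsets U ⊆ V ⊆ X, the restriction map r_{U,V}(T) = P_U T P_U is a contractive linear map B(P_V H) → B(P_U H) that sends 𝔇(V) into 𝔇(U) and 𝔠(V) into 𝔠(U); moreover, for open U ⊆ V ⊆ W ⊆ X one has r_{U,V} ∘ r_{V,W} = r_{U,W}. -/
open TopologicalSpace

section Aux
set_option linter.unusedSectionVars false

open scoped InnerProductSpace

/-- Extension by zero from `C₀(U)` to `C₀(V)` exists when `U ≤ V`. -/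
lemma exists_zeroAtInfty_extend {X : Type} [TopologicalSpace X]
    (ι : ∀ V : Opens X, ZeroAtInftyContinuousMap (↥V) ℂ →⋆ₙₐ[ℂ] ZeroAtInftyContinuousMap X ℂ)
    (hι_mem : ∀ (V : Opens X) (f : ZeroAtInftyContinuousMap (↥V) ℂ) (x : ↥V), ι V f ↑x = f x)
    (hι_nmem : ∀ (V : Opens X) (f : ZeroAtInftyContinuousMap (↥V) ℂ) (x : X), x ∉ V → ι V f x = 0)
    {U V : Opens X} (hUV : U ≤ V) (f : ZeroAtInftyContinuousMap (↥U) ℂ) :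
    ∃ g : ZeroAtInftyContinuousMap (↥V) ℂ, ι V g = ι U f := by
  set F : ZeroAtInftyContinuousMap X ℂ := ι U f with hF
  have hcont : Continuous fun x : ↥V => F ↑x :=
    (map_continuous F).comp continuous_subtype_val
  have hzero : Filter.Tendsto (fun x : ↥V => F ↑x) (Filter.cocompact ↥V) (nhds 0) := by
    rw [Metric.tendsto_nhds]
    intro ε hε
    have hF0 := F.zero_at_infty'
    rw [Metric.tendsto_nhds] at hF0
    have h2 := hF0 ε hε
    rw [Filter.hasBasis_cocompact.eventually_iff] at h2
    obtain ⟨K, hK, hKε⟩ := h2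
    rw [Filter.hasBasis_cocompact.eventually_iff]
    have hCclosed : IsClosed {x : X | ε ≤ dist (F x) 0} :=
      isClosed_le continuous_const ((map_continuous F).dist continuous_const)
    have hCK : {x : X | ε ≤ dist (F x) 0} ⊆ K := by
      intro x hx
      by_contra h
      exact absurd (hKε h) (not_lt.2 hx)
    have hCcomp : IsCompact {x : X | ε ≤ dist (F x) 0} :=
      hK.of_isClosed_subset hCclosed hCK
    have hCV : {x : X | ε ≤ dist (F x) 0} ⊆ (V : Set X) := by
      intro x hx
      have hε' : ε ≤ dist (F x) 0 := hx
      have hne : F x ≠ 0 := by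
        intro h0
        rw [h0, dist_self] at hε'
        linarith
      by_contra hxV
      exact hne (hι_nmem U f x fun hxU => hxV (hUV hxU))
    refine ⟨Subtype.val ⁻¹' {x : X | ε ≤ dist (F x) 0}, ?_, ?_⟩
    · exact Topology.IsInducing.subtypeVal.isCompact_preimage' hCcomp
        (by rwa [Subtype.range_coe])
    · intro x hx
      simp only [Set.mem_compl_iff, Set.mem_preimage, Set.mem_setOf_eq, not_le] at hx
      exact hx
  refine ⟨⟨⟨fun x : ↥V => F ↑x, hcont⟩, hzero⟩, ?_⟩
  ext x
  by_cases hx : x ∈ V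
  · exact hι_mem V _ ⟨x, hx⟩
  · rw [hι_nmem V _ x hx, hι_nmem U f x fun h => hx (hUV h)]

variable {H : Type} [NormedAddCommGroup H] [InnerProductSpace ℂ H] [CompleteSpace H]

/-- If an idempotent `P` contains the range of `A`, then `P * A = A`. -/
lemma left_absorb (P A : H →L[ℂ] H) (hidem : P * P = P)
    (hA : ∀ x, A x ∈ LinearMap.range (P : H →ₗ[ℂ] H)) : P * A = A := by
  ext x
  obtain ⟨y, hy⟩ := hA x
  simp only [ContinuousLinearMap.coe_coe] at hy
  have h : P (P y) = P y := by
    have := congrFun (congrArg (fun T : H →L[ℂ] H => (T : H → H)) hidem) y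
    simpa using this
  simp only [ContinuousLinearMap.mul_apply]
  rw [← hy, h]

/-- If moreover `P` is self-adjoint and absorbs `star A` from the left,
then `A * P = A`. -/
lemma right_absorb (P A : H →L[ℂ] H) (hPsa : IsSelfAdjoint P)
    (h : P * star A = star A) : A * P = A := by
  have h2 := congrArg star h
  rw [star_mul, star_star, hPsa.star_eq] at h2
  exact h2

/-- A self-adjoint idempotent is a contraction. -/
lemma sa_idem_contraction (P : H →L[ℂ] H) (hPsa : IsSelfAdjoint P)
    (hidem : P * P = P) (x : H) : ‖P x‖ ≤ ‖x‖ := by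
  have hPP : P (P x) = P x := by
    have := congrFun (congrArg (fun T : H →L[ℂ] H => (T : H → H)) hidem) x
    simpa using this
  have hadj : ContinuousLinearMap.adjoint P = P := by
    rw [← ContinuousLinearMap.star_eq_adjoint, hPsa.star_eq]
  have hinner : ⟪P x, P x⟫_ℂ = ⟪x, P x⟫_ℂ := by
    rw [← ContinuousLinearMap.adjoint_inner_right P x (P x), hadj, hPP]
  have hsq : ‖P x‖ ^ 2 ≤ ‖x‖ * ‖P x‖ := by
    calc ‖P x‖ ^ 2 = RCLike.re ⟪P x, P x⟫_ℂ := (inner_self_eq_norm_sq (𝕜 := ℂ) _).symm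
    _ = RCLike.re ⟪x, P x⟫_ℂ := by rw [hinner]
    _ ≤ ‖⟪x, P x⟫_ℂ‖ := RCLike.re_le_norm _
    _ ≤ ‖x‖ * ‖P x‖ := norm_inner_le_norm _ _
  rcases eq_or_lt_of_le (norm_nonneg (P x)) with h0 | h0
  · rw [← h0]; exact norm_nonneg x
  · have := hsq
    rw [pow_two] at this
    exact le_of_mul_le_mul_right this h0

end Aux



open TopologicalSpace

/-- Pseudolocality of an operator with respect to a representation `ρ` of `C₀(Y)`. -/
def IsPseudolocal {Y : Type*} [TopologicalSpace Y]
    {H : Type*} [NormedAddCommGroup H] [InnerProductSpace ℂ H] [CompleteSpace H]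
    (ρ : ZeroAtInftyContinuousMap Y ℂ →⋆ₙₐ[ℂ] (H →L[ℂ] H)) (T : H →L[ℂ] H) : Prop :=
  ∀ f : ZeroAtInftyContinuousMap Y ℂ, IsCompactOperator ⇑(T * ρ f - ρ f * T)

/-- Local compactness of an operator with respect to a representation `ρ` of `C₀(Y)`. -/
def IsLocallyCompactOp {Y : Type*} [TopologicalSpace Y]
    {H : Type*} [NormedAddCommGroup H] [InnerProductSpace ℂ H] [CompleteSpace H]
    (ρ : ZeroAtInftyContinuousMap Y ℂ →⋆ₙₐ[ℂ] (H →L[ℂ] H)) (T : H →L[ℂ] H) : Prop :=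
  ∀ f : ZeroAtInftyContinuousMap Y ℂ,
    IsCompactOperator ⇑(T * ρ f) ∧ IsCompactOperator ⇑(ρ f * T)

/-- For open sets `U ⊆ V ⊆ X`, the restriction map `r_{U,V}(T) = P_U T P_U` is a contractive
linear map `B(P_V H) → B(P_U H)` (here an operator "on `P_W H`" is an operator `T` on `H`
with `P_W T P_W = T`), it sends pseudolocal operators of the `V`-module `P_V H` to
pseudolocal operators of the `U`-module `P_U H` and locally compact ones to locally compact
ones, and the restriction maps compose functorially. -/
theorem restriction_map_properties
    {X : Type} [TopologicalSpace X] [LocallyCompactSpace X] [MetrizableSpace X]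
    {H : Type} [NormedAddCommGroup H] [InnerProductSpace ℂ H] [CompleteSpace H]
    (ρ : ZeroAtInftyContinuousMap X ℂ →⋆ₙₐ[ℂ] (H →L[ℂ] H))
    -- extension by zero `i_V : C₀(V) → C₀(X)` for each open `V ⊆ X`
    (ι : ∀ V : Opens X, ZeroAtInftyContinuousMap (↥V) ℂ →⋆ₙₐ[ℂ] ZeroAtInftyContinuousMap X ℂ)
    (hι_mem : ∀ (V : Opens X) (f : ZeroAtInftyContinuousMap (↥V) ℂ) (x : ↥V), ι V f ↑x = f x)
    (hι_nmem : ∀ (V : Opens X) (f : ZeroAtInftyContinuousMap (↥V) ℂ) (x : X), x ∉ V → ι V f x = 0)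
    -- `P V` is the orthogonal projection onto the closed span of `{ρ(i_V f) ξ}`
    (P : ∀ V : Opens X, H →L[ℂ] H)
    (hPsa : ∀ V, IsSelfAdjoint (P V)) (hPidem : ∀ V, P V * P V = P V)
    (hPrange : ∀ V : Opens X, LinearMap.range (P V : H →ₗ[ℂ] H) =
      (Submodule.span ℂ {v : H | ∃ (f : ZeroAtInftyContinuousMap (↥V) ℂ) (ξ : H),
        ρ (ι V f) ξ = v}).topologicalClosure)
    -- the statement
    (U V W : Opens X) (hUV : U ≤ V) (hVW : V ≤ W) :
    (∀ T : H →L[ℂ] H, P U * (P U * T * P U) * P U = P U * T * P U) ∧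
    (∀ S T : H →L[ℂ] H, P U * (S + T) * P U = P U * S * P U + P U * T * P U) ∧
    (∀ (c : ℂ) (T : H →L[ℂ] H), P U * (c • T) * P U = c • (P U * T * P U)) ∧
    (∀ T : H →L[ℂ] H, ‖P U * T * P U‖ ≤ ‖T‖) ∧
    (∀ T : H →L[ℂ] H, P V * T * P V = T → IsPseudolocal (ρ.comp (ι V)) T →
      IsPseudolocal (ρ.comp (ι U)) (P U * T * P U)) ∧
    (∀ T : H →L[ℂ] H, P V * T * P V = T → IsLocallyCompactOp (ρ.comp (ι V)) T →
      IsLocallyCompactOp (ρ.comp (ι U)) (P U * T * P U)) ∧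
    (∀ T : H →L[ℂ] H, P W * T * P W = T →
      P U * (P V * T * P V) * P U = P U * T * P U) := by
  classical
  -- Extension existence
  have hext : ∀ {A B : Opens X}, A ≤ B → ∀ f : ZeroAtInftyContinuousMap (↥A) ℂ,
      ∃ g : ZeroAtInftyContinuousMap (↥B) ℂ, ι B g = ι A f :=
    fun {A B} hAB f => exists_zeroAtInfty_extend ι hι_mem hι_nmem hAB f
  -- ranges of represented operators lie in the ranges of the projections
  have hmem : ∀ (A : Opens X) (f : ZeroAtInftyContinuousMap (↥A) ℂ) (x : H),
      ρ (ι A f) x ∈ LinearMap.range (P A : H →ₗ[ℂ] H) := by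
    intro A f x
    rw [hPrange A]
    exact Submodule.le_topologicalClosure _ (Submodule.subset_span ⟨f, x, rfl⟩)
  -- absorption of represented operators by projections
  have habsL : ∀ (A : Opens X) (f : ZeroAtInftyContinuousMap (↥A) ℂ),
      P A * ρ (ι A f) = ρ (ι A f) :=
    fun A f => left_absorb (P A) (ρ (ι A f)) (hPidem A) (hmem A f)
  have habsR : ∀ (A : Opens X) (f : ZeroAtInftyContinuousMap (↥A) ℂ),
      ρ (ι A f) * P A = ρ (ι A f) := by
    intro A f
    refine right_absorb (P A) (ρ (ι A f)) (hPsa A) ?_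
    have : star (ρ (ι A f)) = ρ (ι A (star f)) := by
      rw [← map_star, ← map_star]
    rw [this]
    exact habsL A (star f)
  -- monotonicity of projections
  have hrangele : ∀ {A B : Opens X}, A ≤ B →
      LinearMap.range (P A : H →ₗ[ℂ] H) ≤ LinearMap.range (P B : H →ₗ[ℂ] H) := by
    intro A B hAB
    rw [hPrange A, hPrange B]
    refine Submodule.topologicalClosure_mono (Submodule.span_mono ?_)
    rintro v ⟨f, ξ, rfl⟩
    obtain ⟨g, hg⟩ := hext hAB f
    exact ⟨g, ξ, by rw [hg]⟩
  have hPBA : ∀ {A B : Opens X}, A ≤ B → P B * P A = P A := by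
    intro A B hAB
    exact left_absorb (P B) (P A) (hPidem B) fun x => hrangele hAB ⟨x, rfl⟩
  have hPAB : ∀ {A B : Opens X}, A ≤ B → P A * P B = P A := by
    intro A B hAB
    refine right_absorb (P B) (P A) (hPsa B) ?_
    rw [(hPsa A).star_eq]
    exact hPBA hAB
  refine ⟨?_, ?_, ?_, ?_, ?_, ?_, ?_⟩
  · -- idempotence of the restriction map on its range
    intro T
    have h := hPidem U
    calc P U * (P U * T * P U) * P U
        = (P U * P U) * T * (P U * P U) := by simp only [mul_assoc]
      _ = P U * T * P U := by rw [h]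
  · intro S T
    rw [mul_add, add_mul]
  · intro c T
    rw [mul_smul_comm, smul_mul_assoc]
  · -- contractivity
    intro T
    refine ContinuousLinearMap.opNorm_le_bound _ (norm_nonneg T) fun x => ?_
    have h1 : (P U * T * P U) x = P U (T (P U x)) := rfl
    rw [h1]
    calc ‖P U (T (P U x))‖ ≤ ‖T (P U x)‖ :=
          sa_idem_contraction (P U) (hPsa U) (hPidem U) _
      _ ≤ ‖T‖ * ‖P U x‖ := T.le_opNorm _
      _ ≤ ‖T‖ * ‖x‖ := by
          have := sa_idem_contraction (P U) (hPsa U) (hPidem U) x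
          exact mul_le_mul_of_nonneg_left this (norm_nonneg T)
  · -- pseudolocality is preserved
    intro T hT hpl g
    obtain ⟨g', hg'⟩ := hext hUV g
    have hAeq : (ρ.comp (ι V)) g' = (ρ.comp (ι U)) g := by
      show ρ (ι V g') = ρ (ι U g)
      rw [hg']
    set A : H →L[ℂ] H := (ρ.comp (ι U)) g with hA
    have hQA : P U * A = A := habsL U g
    have hAQ : A * P U = A := habsR U g
    have hC : IsCompactOperator ⇑(T * A - A * T) := by
      have := hpl g'
      rwa [hAeq] at this
    have key : (P U * T * P U) * A - A * (P U * T * P U)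
        = P U * (T * A - A * T) * P U := by
      rw [mul_sub, sub_mul]
      congr 1
      · calc (P U * T * P U) * A = (P U * T) * (P U * A) := mul_assoc _ _ _
        _ = P U * (T * A) := by rw [hQA, mul_assoc]
        _ = P U * (T * (A * P U)) := by rw [hAQ]
        _ = P U * (T * A) * P U := by simp only [mul_assoc]
      · calc A * (P U * T * P U) = ((A * P U) * T) * P U := by simp only [mul_assoc]
        _ = (A * T) * P U := by rw [hAQ]
        _ = ((P U * A) * T) * P U := by rw [hQA]
        _ = P U * (A * T) * P U := by simp only [mul_assoc]
    rw [key]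
    have h2 := (hC.comp_clm (P U)).clm_comp (P U)
    have h3 : ⇑(P U * (T * A - A * T) * P U)
        = ⇑(P U) ∘ (⇑(T * A - A * T) ∘ ⇑(P U)) := by
      funext x; rfl
    rwa [h3]
  · -- local compactness is preserved
    intro T hT hlc g
    obtain ⟨g', hg'⟩ := hext hUV g
    have hAeq : (ρ.comp (ι V)) g' = (ρ.comp (ι U)) g := by
      show ρ (ι V g') = ρ (ι U g)
      rw [hg']
    set A : H →L[ℂ] H := (ρ.comp (ι U)) g with hA
    have hQA : P U * A = A := habsL U g
    have hAQ : A * P U = A := habsR U g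
    obtain ⟨hc1, hc2⟩ := hlc g'
    rw [hAeq] at hc1 hc2
    constructor
    · have key : (P U * T * P U) * A = P U * ((T * A) * P U) := by
        calc (P U * T * P U) * A = (P U * T) * (P U * A) := mul_assoc _ _ _
          _ = P U * (T * A) := by rw [hQA, mul_assoc]
          _ = P U * (T * (A * P U)) := by rw [hAQ]
          _ = P U * ((T * A) * P U) := by simp only [mul_assoc]
      rw [key]
      have h2 := (hc1.comp_clm (P U)).clm_comp (P U)
      have h3 : ⇑(P U * ((T * A) * P U)) = ⇑(P U) ∘ (⇑(T * A) ∘ ⇑(P U)) := by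
        funext x; rfl
      rwa [h3]
    · have key : A * (P U * T * P U) = P U * ((A * T) * P U) := by
        calc A * (P U * T * P U) = ((A * P U) * T) * P U := by simp only [mul_assoc]
          _ = (A * T) * P U := by rw [hAQ]
          _ = ((P U * A) * T) * P U := by rw [hQA]
          _ = P U * ((A * T) * P U) := by simp only [mul_assoc]
      rw [key]
      have h2 := (hc2.comp_clm (P U)).clm_comp (P U)
      have h3 : ⇑(P U * ((A * T) * P U)) = ⇑(P U) ∘ (⇑(A * T) ∘ ⇑(P U)) := by
        funext x; rfl
      rwa [h3]
  · -- functoriality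
    intro T hT
    calc P U * (P V * T * P V) * P U
        = (P U * P V) * T * (P V * P U) := by simp only [mul_assoc]
      _ = P U * T * P U := by rw [hPAB hUV, hPBA hUV]
end

section
/- Let X be a locally compact metrizable topological space, H an X-module, and U ⊆ V open subsets of X. For all pseudolocal operators S, T ∈ 𝔇(V) on the V-module P_V H, the operator r_{U,V}(S) r_{U,V}(T) − r_{U,V}(ST) = P_U S (P_V − P_U) T P_U, viewed as an operator on P_U H, is locally compact for the U-module P_U H; consequently r_{U,V} induces a star-algebra homomorphism from 𝔇(V) modulo 𝔠(V) to 𝔇(U) modulo 𝔠(U). -/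
open TopologicalSpace Metric Set

theorem myExistsRestrict {X : Type} [TopologicalSpace X]
    (U V : Opens X) (hUV : U ≤ V)
    (F : ZeroAtInftyContinuousMap X ℂ)
    (hF : ∀ x : X, x ∉ U → F x = 0) :
    ∃ g : ZeroAtInftyContinuousMap (↥V) ℂ, ∀ x : ↥V, g x = F x := by
  refine ⟨⟨⟨fun x => F (x : X), by fun_prop⟩, ?_⟩, fun x => rfl⟩
  rw [Filter.hasBasis_cocompact.tendsto_iff Metric.nhds_basis_closedBall]
  intro ε hε
  obtain ⟨K, hK, hKF⟩ :=
    (Filter.hasBasis_cocompact.tendsto_iff Metric.nhds_basis_closedBall).mp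
      F.zero_at_infty' (ε / 2) (by positivity)
  have hDclosed : IsClosed {x : X | ε ≤ ‖F x‖} :=
    isClosed_le continuous_const (by fun_prop)
  have hDK : {x : X | ε ≤ ‖F x‖} ⊆ K := by
    intro x hx
    by_contra hxK
    simp only [mem_setOf_eq] at hx
    have h2 : ‖F x‖ ≤ ε / 2 := mem_closedBall_zero_iff.mp (hKF x hxK)
    linarith
  have hDcomp : IsCompact {x : X | ε ≤ ‖F x‖} := hK.of_isClosed_subset hDclosed hDK
  have hDV : {x : X | ε ≤ ‖F x‖} ⊆ (V : Set X) := by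
    intro x hx
    by_contra hxV
    have hxU : x ∉ U := fun h => hxV (hUV h)
    simp only [mem_setOf_eq] at hx
    rw [hF x hxU, norm_zero] at hx
    linarith
  refine ⟨(((↑) : ↥V → X)) ⁻¹' {x : X | ε ≤ ‖F x‖}, ?_, ?_⟩
  · rw [Subtype.isCompact_iff]
    have : (((↑) : ↥V → X)) '' ((((↑) : ↥V → X)) ⁻¹' {x : X | ε ≤ ‖F x‖}) = {x : X | ε ≤ ‖F x‖} := by
      rw [Set.image_preimage_eq_inter_range, Subtype.range_coe]
      exact Set.inter_eq_left.mpr hDV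
    rw [this]; exact hDcomp
  · intro x hx
    simp only [mem_compl_iff, mem_preimage, mem_setOf_eq, not_le] at hx
    rw [mem_closedBall_zero_iff]
    exact le_of_lt hx


/-- For open sets `U ⊆ V ⊆ X` and pseudolocal operators `S, T` on the `V`-module `P_V H`,
the defect `r_{U,V}(S) r_{U,V}(T) - r_{U,V}(S T)`, which equals
`± P_U S (P_V - P_U) T P_U`, is locally compact for the `U`-module `P_U H`; consequently
`r_{U,V}` induces a star-algebra homomorphism `𝔇(V)/𝔠(V) → 𝔇(U)/𝔠(U)`. -/
theorem restriction_multiplicative_mod_locally_compact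
    {X : Type} [TopologicalSpace X] [LocallyCompactSpace X] [MetrizableSpace X]
    {H : Type} [NormedAddCommGroup H] [InnerProductSpace ℂ H] [CompleteSpace H]
    (ρ : ZeroAtInftyContinuousMap X ℂ →⋆ₙₐ[ℂ] (H →L[ℂ] H))
    -- extension by zero `i_V : C₀(V) → C₀(X)` for each open `V ⊆ X`
    (ι : ∀ V : Opens X, ZeroAtInftyContinuousMap (↥V) ℂ →⋆ₙₐ[ℂ] ZeroAtInftyContinuousMap X ℂ)
    (hι_mem : ∀ (V : Opens X) (f : ZeroAtInftyContinuousMap (↥V) ℂ) (x : ↥V), ι V f ↑x = f x)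
    (hι_nmem : ∀ (V : Opens X) (f : ZeroAtInftyContinuousMap (↥V) ℂ) (x : X), x ∉ V → ι V f x = 0)
    -- `P V` is the orthogonal projection onto the closed span of `{ρ(i_V f) ξ}`
    (P : ∀ V : Opens X, H →L[ℂ] H)
    (hPsa : ∀ V, IsSelfAdjoint (P V)) (hPidem : ∀ V, P V * P V = P V)
    (hPrange : ∀ V : Opens X, LinearMap.range (P V : H →ₗ[ℂ] H) =
      (Submodule.span ℂ {v : H | ∃ (f : ZeroAtInftyContinuousMap (↥V) ℂ) (ξ : H),
        ρ (ι V f) ξ = v}).topologicalClosure)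
    -- the statement
    (U V : Opens X) (hUV : U ≤ V) (S T : H →L[ℂ] H)
    (hScorner : P V * S * P V = S) (hTcorner : P V * T * P V = T)
    (hS : IsPseudolocal (ρ.comp (ι V)) S) (hT : IsPseudolocal (ρ.comp (ι V)) T) :
    IsLocallyCompactOp (ρ.comp (ι U)) (P U * S * (P V - P U) * T * P U) ∧
    IsLocallyCompactOp (ρ.comp (ι U))
      ((P U * S * P U) * (P U * T * P U) - P U * (S * T) * P U) := by
  -- extension: every f ∈ C₀(U) comes from some g ∈ C₀(V)
  have key : ∀ f : ZeroAtInftyContinuousMap (↥U) ℂ,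
      ∃ g : ZeroAtInftyContinuousMap (↥V) ℂ, ι V g = ι U f := by
    intro f
    obtain ⟨g, hg⟩ := myExistsRestrict U V hUV (ι U f) (fun x hx => hι_nmem U f x hx)
    refine ⟨g, ?_⟩
    ext x
    by_cases hx : x ∈ V
    · rw [show x = ((⟨x, hx⟩ : ↥V) : X) from rfl, hι_mem V g ⟨x, hx⟩]
      exact hg ⟨x, hx⟩
    · rw [hι_nmem V g x hx, hι_nmem U f x (fun h => hx (hUV h))]
  -- projections fix their ranges
  have hfix : ∀ (W : Opens X) (v : H), v ∈ LinearMap.range (P W : H →ₗ[ℂ] H) → P W v = v := by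
    intro W v hv
    obtain ⟨w, hw⟩ := hv
    calc P W v = (P W * P W) w := by rw [← hw]; rfl
      _ = P W w := by rw [hPidem]
      _ = v := hw
  have hPleft : ∀ (W : Opens X) (h : ZeroAtInftyContinuousMap (↥W) ℂ),
      P W * ρ (ι W h) = ρ (ι W h) := by
    intro W h
    ext ξ
    have hmem : ρ (ι W h) ξ ∈ LinearMap.range (P W : H →ₗ[ℂ] H) := by
      rw [hPrange]
      exact Submodule.le_topologicalClosure _ (Submodule.subset_span ⟨h, ξ, rfl⟩)
    exact hfix W _ hmem
  have hPright : ∀ (W : Opens X) (h : ZeroAtInftyContinuousMap (↥W) ℂ),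
      ρ (ι W h) * P W = ρ (ι W h) := by
    intro W h
    have h1 := congrArg star (hPleft W (star h))
    rwa [star_mul, (hPsa W).star_eq, ← map_star, ← map_star, star_star] at h1
  -- range inclusion and projection relations
  set Q := P U with hQdef
  set R := P V with hRdef
  have hrange_le : LinearMap.range (Q : H →ₗ[ℂ] H) ≤ LinearMap.range (R : H →ₗ[ℂ] H) := by
    rw [hPrange, hPrange]
    apply Submodule.topologicalClosure_mono
    apply Submodule.span_mono
    rintro v ⟨f, ξ, rfl⟩
    obtain ⟨g, hg⟩ := key f
    exact ⟨g, ξ, by rw [hg]⟩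
  have hRQ : R * Q = Q := by
    ext ξ
    exact hfix V (Q ξ) (hrange_le ⟨ξ, rfl⟩)
  have hQR : Q * R = Q := by
    have h1 := congrArg star hRQ
    rwa [star_mul, (hPsa U).star_eq, (hPsa V).star_eq] at h1
  have hQQ : Q * Q = Q := hPidem U
  have hRR : R * R = R := hPidem V
  -- lifted relations for simp
  have lift : ∀ {a b c : H →L[ℂ] H}, a * b = c → ∀ x : H →L[ℂ] H, a * (b * x) = c * x :=
    fun h x => by rw [← mul_assoc, h]
  have hcomp_left : ∀ (B C : H →L[ℂ] H), IsCompactOperator ⇑C →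
      IsCompactOperator ⇑(B * C) := fun B C h => h.clm_comp B
  have hcomp_right : ∀ (B C : H →L[ℂ] H), IsCompactOperator ⇑B →
      IsCompactOperator ⇑(B * C) := fun B C h => h.comp_clm C
  have main : IsLocallyCompactOp (ρ.comp (ι U)) (Q * S * (R - Q) * T * Q) := by
    intro f
    obtain ⟨g, hg⟩ := key f
    set ρf := ρ (ι U f) with hρfdef
    have hρ_apply : (ρ.comp (ι U)) f = ρf := rfl
    have hρV_apply : (ρ.comp (ι V)) g = ρf := by
      show ρ (ι V g) = ρf
      rw [hg]
    have hQρ : Q * ρf = ρf := hPleft U f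
    have hρQ : ρf * Q = ρf := hPright U f
    have hRρ : R * ρf = ρf := by rw [hρfdef, ← hg]; exact hPleft V g
    have hρR : ρf * R = ρf := by rw [hρfdef, ← hg]; exact hPright V g
    have hTg : IsCompactOperator ⇑(T * ρf - ρf * T) := by
      have := hT g
      rwa [hρV_apply] at this
    have hSg : IsCompactOperator ⇑(ρf * S - S * ρf) := by
      have := (hS g).neg
      rw [hρV_apply] at this
      have hcoe : ρf * S - S * ρf = -(S * ρf - ρf * S) := (neg_sub _ _).symm
      rw [hcoe, ContinuousLinearMap.coe_neg']
      exact this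
    constructor
    · have claim1 : Q * S * (R - Q) * T * Q * ρf
          = (Q * (S * (R - Q))) * (T * ρf - ρf * T) := by
        simp only [mul_sub, sub_mul, mul_assoc, hQρ, hRρ, lift hQρ, lift hRρ,
          lift hρQ, lift hρR, lift hQQ, lift hRR, lift hQR, lift hRQ]
        abel
      rw [hρ_apply, claim1]
      exact hcomp_left _ _ hTg
    · have claim2 : ρf * (Q * S * (R - Q) * T * Q)
          = (ρf * S - S * ρf) * ((R - Q) * (T * Q)) := by
        simp only [mul_sub, sub_mul, mul_assoc, hQρ, hRρ, lift hQρ, lift hRρ,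
          lift hρQ, lift hρR, lift hQQ, lift hRR, lift hQR, lift hRQ]
        abel
      rw [hρ_apply, claim2]
      exact hcomp_right _ _ hSg
  refine ⟨main, ?_⟩
  have hB : (Q * S * Q) * (Q * T * Q) - Q * (S * T) * Q = -(Q * S * (R - Q) * T * Q) := by
    rw [← hScorner, ← hTcorner]
    simp only [mul_sub, sub_mul, mul_assoc, neg_sub,
      lift hQQ, lift hRR, lift hQR, lift hRQ]
    try abel
  rw [hB]
  intro f
  obtain ⟨h1, h2⟩ := main f
  constructor
  · rw [neg_mul]
    rw [ContinuousLinearMap.coe_neg']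
    exact h1.neg
  · rw [mul_neg]
    rw [ContinuousLinearMap.coe_neg']
    exact h2.neg
end

section
/- (Uniqueness axiom for the sheaf of noncommutative symbols.) Let X be a locally compact metrizable topological space, H an X-module, and let an open set U ⊆ X be a union U = ⋃_{j∈J} U_j of open subsets. If T ∈ 𝔇(U) is pseudolocal on the U-module P_U H and r_{U_j,U}(T) = P_{U_j} T P_{U_j} ∈ 𝔠(U_j) for every j ∈ J, then T ∈ 𝔠(U). -/
open TopologicalSpace Filter Set Topology

/-- Multiplication of a `C₀` function by a bounded continuous real function. -/
noncomputable def ZeroAtInftyContinuousMap.mulReal {Y : Type*} [TopologicalSpace Y]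
    (g : ZeroAtInftyContinuousMap Y ℂ) (φ : C(Y, ℝ)) (hφ : ∀ x, |φ x| ≤ 1) :
    ZeroAtInftyContinuousMap Y ℂ where
  toFun := fun x => g x * (φ x : ℂ)
  continuous_toFun := (map_continuous g).mul (Complex.continuous_ofReal.comp φ.continuous)
  zero_at_infty' := by
    refine squeeze_zero_norm (a := fun x => ‖g x‖) (fun x => ?_) ?_
    · calc ‖g x * (φ x : ℂ)‖ = ‖g x‖ * |φ x| := by rw [norm_mul, Complex.norm_real]; rfl
        _ ≤ ‖g x‖ := mul_le_of_le_one_right (norm_nonneg _) (hφ x)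
    · simpa using (zero_at_infty g).norm

@[simp] lemma ZeroAtInftyContinuousMap.mulReal_apply {Y : Type*} [TopologicalSpace Y]
    (g : ZeroAtInftyContinuousMap Y ℂ) (φ : C(Y, ℝ)) (hφ : ∀ x, |φ x| ≤ 1) (x : Y) :
    g.mulReal φ hφ x = g x * (φ x : ℂ) := rfl

lemma zeroAtInfty_sum_apply {α : Type*} [TopologicalSpace α] {ι : Type*} (s : Finset ι)
    (f : ι → ZeroAtInftyContinuousMap α ℂ) (x : α) :
    (∑ i ∈ s, f i) x = ∑ i ∈ s, f i x := by
  classical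
  induction s using Finset.induction_on with
  | empty => simp
  | @insert a s ha ih => simp [Finset.sum_insert ha, ih]

lemma isCompactOperator_finset_sum {H : Type*} [NormedAddCommGroup H] [NormedSpace ℂ H]
    {ι : Type*} (s : Finset ι) (F : ι → H →L[ℂ] H)
    (h : ∀ i ∈ s, IsCompactOperator ⇑(F i)) :
    IsCompactOperator ⇑(∑ i ∈ s, F i) := by
  classical
  induction s using Finset.induction_on with
  | empty => simpa using isCompactOperator_zero
  | @insert a s ha ih =>
      rw [Finset.sum_insert ha, ContinuousLinearMap.coe_add']
      exact (h a (Finset.mem_insert_self a s)).add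
        (ih fun i hi => h i (Finset.mem_insert_of_mem hi))

/-- Uniqueness axiom for the sheaf of noncommutative symbols: if `T` is pseudolocal on the
`U`-module `P_U H` and the restriction `P_{U_j} T P_{U_j}` is locally compact on each member
`U_j` of an open cover of `U`, then `T` is locally compact on `U`. -/
theorem symbol_sheaf_uniqueness
    {X : Type} [TopologicalSpace X] [LocallyCompactSpace X] [MetrizableSpace X]
    {H : Type} [NormedAddCommGroup H] [InnerProductSpace ℂ H] [CompleteSpace H]
    (ρ : ZeroAtInftyContinuousMap X ℂ →⋆ₙₐ[ℂ] (H →L[ℂ] H))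
    -- extension by zero `i_V : C₀(V) → C₀(X)` for each open `V ⊆ X`
    (ι : ∀ V : Opens X, ZeroAtInftyContinuousMap (↥V) ℂ →⋆ₙₐ[ℂ] ZeroAtInftyContinuousMap X ℂ)
    (hι_mem : ∀ (V : Opens X) (f : ZeroAtInftyContinuousMap (↥V) ℂ) (x : ↥V), ι V f ↑x = f x)
    (hι_nmem : ∀ (V : Opens X) (f : ZeroAtInftyContinuousMap (↥V) ℂ) (x : X), x ∉ V → ι V f x = 0)
    -- `P V` is the orthogonal projection onto the closed span of `{ρ(i_V f) ξ}`
    (P : ∀ V : Opens X, H →L[ℂ] H)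
    (hPsa : ∀ V, IsSelfAdjoint (P V)) (hPidem : ∀ V, P V * P V = P V)
    (hPrange : ∀ V : Opens X, LinearMap.range (P V : H →ₗ[ℂ] H) =
      (Submodule.span ℂ {v : H | ∃ (f : ZeroAtInftyContinuousMap (↥V) ℂ) (ξ : H),
        ρ (ι V f) ξ = v}).topologicalClosure)
    -- the statement
    {J : Type} (U : Opens X) (𝒰 : J → Opens X)
    (hcover : (U : Set X) = ⋃ j, (𝒰 j : Set X))
    (T : H →L[ℂ] H) (hcorner : P U * T * P U = T)
    (hT : IsPseudolocal (ρ.comp (ι U)) T)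
    (hloc : ∀ j, IsLocallyCompactOp (ρ.comp (ι (𝒰 j))) (P (𝒰 j) * T * P (𝒰 j))) :
    IsLocallyCompactOp (ρ.comp (ι U)) T := by
  classical
  set ρU := ρ.comp (ι U) with hρU
  -- Step B: `ρ (ι V f)` is supported on the range of `P V`, on both sides.
  have hPA : ∀ (V : Opens X) (f : ZeroAtInftyContinuousMap (↥V) ℂ),
      P V * ρ (ι V f) = ρ (ι V f) := by
    intro V f
    ext ξ
    have hmem : ρ (ι V f) ξ ∈ LinearMap.range (P V : H →ₗ[ℂ] H) := by
      rw [hPrange]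
      exact Submodule.le_topologicalClosure _ (Submodule.subset_span ⟨f, ξ, rfl⟩)
    obtain ⟨w, hw⟩ := hmem
    calc (P V * ρ (ι V f)) ξ = P V (ρ (ι V f) ξ) := rfl
      _ = P V (P V w) := by rw [← hw]; rfl
      _ = (P V * P V) w := rfl
      _ = P V w := by rw [hPidem]
      _ = ρ (ι V f) ξ := hw
  have hAP : ∀ (V : Opens X) (f : ZeroAtInftyContinuousMap (↥V) ℂ),
      ρ (ι V f) * P V = ρ (ι V f) := by
    intro V f
    have h1 := hPA V (star f)
    have h2 : ρ (ι V (star f)) = star (ρ (ι V f)) := by rw [map_star, map_star]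
    rw [h2] at h1
    have h3 := congrArg star h1
    rwa [star_mul, star_star, (hPsa V).star_eq] at h3
  -- Step A+C: the core case where `g` has support in a compact subset of some `𝒰 j`.
  have core : ∀ (g : ZeroAtInftyContinuousMap (↥U) ℂ) (j : J) (K : Set X),
      IsCompact K → K ⊆ (𝒰 j : Set X) → (∀ x : ↥U, g x ≠ 0 → (x : X) ∈ K) →
      IsCompactOperator ⇑(T * ρU g) ∧ IsCompactOperator ⇑(ρU g * T) := by
    intro g j K hKc hKsub hKsupp
    -- `ι U g` vanishes outside `K`
    have hvanish : ∀ x : X, x ∉ K → ι U g x = 0 := by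
      intro x hx
      by_cases hxU : x ∈ U
      · have := hι_mem U g ⟨x, hxU⟩
        rw [this]
        by_contra h0
        exact hx (hKsupp ⟨x, hxU⟩ h0)
      · exact hι_nmem U g x hxU
    -- build `g' ∈ C₀(𝒰 j)` with `ι (𝒰 j) g' = ι U g`
    have hcont : Continuous fun x : ↥(𝒰 j) => ι U g (x : X) :=
      (map_continuous (ι U g)).comp continuous_subtype_val
    have hSc : IsCompact ((Subtype.val : ↥(𝒰 j) → X) ⁻¹' K) := by
      rw [Topology.IsEmbedding.subtypeVal.isCompact_iff]
      have : (Subtype.val : ↥(𝒰 j) → X) '' (Subtype.val ⁻¹' K) = K := by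
        rw [Set.image_preimage_eq_inter_range, Subtype.range_coe]
        exact Set.inter_eq_self_of_subset_left hKsub
      rw [this]; exact hKc
    have hzero : Tendsto (fun x : ↥(𝒰 j) => ι U g (x : X)) (cocompact _) (𝓝 0) := by
      refine tendsto_nhds_of_eventually_eq ?_
      filter_upwards [hSc.compl_mem_cocompact] with x hx
      exact hvanish x fun hK => hx hK
    set g' : ZeroAtInftyContinuousMap (↥(𝒰 j)) ℂ := ⟨⟨fun x => ι U g (x : X), hcont⟩, hzero⟩
      with hg'
    have hext : ι (𝒰 j) g' = ι U g := by
      ext x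
      by_cases hx : x ∈ 𝒰 j
      · exact hι_mem (𝒰 j) g' ⟨x, hx⟩
      · rw [hι_nmem (𝒰 j) g' x hx, hvanish x fun hK => hx (hKsub hK)]
    -- the operator `A`
    set A := ρU g with hA
    have hρg' : ρ (ι (𝒰 j) g') = A := by rw [hext]; rfl
    set Pj := P (𝒰 j) with hPj
    have hA_P : A * Pj = A := by rw [← hρg']; exact hAP (𝒰 j) g'
    have hcomm : IsCompactOperator ⇑(T * A - A * T) := hT g
    have h1 : IsCompactOperator ⇑(A * T * Pj) := by
      have := (hloc j g').2
      rw [show ρ.comp (ι (𝒰 j)) g' = A from hρg'] at this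
      rwa [show A * (Pj * T * Pj) = A * T * Pj by
        rw [← mul_assoc, ← mul_assoc, hA_P]] at this
    have key : A * T = A * T * Pj + ((A * T - T * A) * (1 - Pj)) := by
      have hTA : T * A * Pj = T * A := by rw [mul_assoc, hA_P]
      rw [sub_mul, mul_sub, mul_sub, mul_one, mul_one, hTA]
      abel
    have h2 : IsCompactOperator ⇑((A * T - T * A) * (1 - Pj)) := by
      have hneg : IsCompactOperator ⇑(A * T - T * A) := by
        have := hcomm.neg
        rwa [show (-⇑(T * A - A * T)) = ⇑(A * T - T * A) by
          ext ξ; simp [ContinuousLinearMap.sub_apply]] at this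
      exact hneg.comp_clm (1 - Pj)
    have hAT : IsCompactOperator ⇑(A * T) := by
      rw [key, ContinuousLinearMap.coe_add']
      exact h1.add h2
    have hTA : IsCompactOperator ⇑(T * A) := by
      have : T * A = (T * A - A * T) + A * T := by abel
      rw [this, ContinuousLinearMap.coe_add']
      exact hcomm.add hAT
    exact ⟨hTA, hAT⟩
  -- Step D: the case of compact support inside `U`.
  have cs : ∀ (g : ZeroAtInftyContinuousMap (↥U) ℂ) (K : Set X),
      IsCompact K → K ⊆ (U : Set X) → (∀ x : ↥U, g x ≠ 0 → (x : X) ∈ K) →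
      IsCompactOperator ⇑(T * ρU g) ∧ IsCompactOperator ⇑(ρU g * T) := by
    intro g K hKc hKU hKsupp
    obtain ⟨s, hs⟩ := hKc.elim_finite_subcover (fun j => (𝒰 j : Set X))
      (fun j => (𝒰 j).isOpen) (by rw [← hcover]; exact hKU)
    set n := s.card with hn
    set e := s.equivFin with he
    have hcov : K ⊆ ⋃ i : Fin n, ((𝒰 ((e.symm i : ↥s) : J) : Set X)) := by
      intro x hx
      obtain ⟨j, hj, hxj⟩ := Set.mem_iUnion₂.mp (hs hx)
      refine Set.mem_iUnion.mpr ⟨e ⟨j, hj⟩, ?_⟩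
      simpa using hxj
    obtain ⟨φ, hφsub, hφsum, hφmem, hφcp⟩ :=
      exists_continuous_sum_one_of_isOpen_isCompact
        (s := fun i : Fin n => ((𝒰 ((e.symm i : ↥s) : J) : Set X)))
        (fun i => (𝒰 _).isOpen) hKc hcov
    · -- the pieces
      set gi : Fin n → ZeroAtInftyContinuousMap (↥U) ℂ := fun i =>
        g.mulReal ((φ i).comp ⟨Subtype.val, continuous_subtype_val⟩)
          (fun x => by
            show |φ i (x : X)| ≤ 1
            exact abs_le.mpr ⟨by linarith [(hφmem i (x : X)).1], (hφmem i (x : X)).2⟩)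
        with hgi
      have hgsum : g = ∑ i, gi i := by
        ext x
        have hrhs : (∑ i, gi i) x = ∑ i, g x * ((φ i (x : X) : ℝ) : ℂ) := by
          rw [zeroAtInfty_sum_apply]
          rfl
        rw [hrhs]
        by_cases hxK : (x : X) ∈ K
        · have h1 : ∑ i, φ i (x : X) = 1 := by simpa using hφsum hxK
          calc g x = g x * ((∑ i, φ i (x : X) : ℝ) : ℂ) := by
                rw [h1]; simp
            _ = ∑ i, g x * ((φ i (x : X) : ℝ) : ℂ) := by
                rw [Complex.ofReal_sum, Finset.mul_sum]
        · have h0 : g x = 0 := by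
            by_contra h0
            exact hxK (hKsupp x h0)
          simp [h0]
      have hci : ∀ i : Fin n, IsCompactOperator ⇑(T * ρU (gi i)) ∧
          IsCompactOperator ⇑(ρU (gi i) * T) := by
        intro i
        refine core (gi i) ((e.symm i : ↥s) : J) (tsupport (φ i)) (hφcp i) (hφsub i) ?_
        intro x hx
        refine subset_tsupport (φ i) ?_
        simp only [Function.mem_support]
        intro hsupp0
        apply hx
        show g x * ((φ i (x : X) : ℝ) : ℂ) = 0
        rw [hsupp0]
        simp
      constructor
      · have heq : T * ρU g = ∑ i, T * ρU (gi i) := by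
          rw [hgsum, map_sum, Finset.mul_sum]
        rw [heq]
        exact isCompactOperator_finset_sum _ _ (fun i _ => (hci i).1)
      · have heq : ρU g * T = ∑ i, ρU (gi i) * T := by
          rw [hgsum, map_sum, Finset.sum_mul]
        rw [heq]
        exact isCompactOperator_finset_sum _ _ (fun i _ => (hci i).2)
  -- Step E: general `f ∈ C₀(U)` by approximation by compactly supported functions.
  intro f
  letI : LocallyCompactSpace ↥U := U.isOpen.isOpenEmbedding_subtypeVal.locallyCompactSpace
  letI : PseudoMetrizableSpace ↥U :=
    inferInstanceAs (PseudoMetrizableSpace ((U : Set X) : Type))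
  letI : PseudoMetricSpace ↥U := TopologicalSpace.pseudoMetrizableSpacePseudoMetric ↥U
  have approx : ∀ n : ℕ, ∃ g : ZeroAtInftyContinuousMap (↥U) ℂ,
      (IsCompactOperator ⇑(T * ρU g) ∧ IsCompactOperator ⇑(ρU g * T)) ∧
      ‖f - g‖ ≤ 1 / (n + 1 : ℝ) := by
    intro n
    have hεpos : (0 : ℝ) < 1 / (n + 1 : ℝ) := by positivity
    have hev : ∀ᶠ x in cocompact ↥U, ‖f x‖ < 1 / (n + 1 : ℝ) := by
      have := Metric.tendsto_nhds.mp (zero_at_infty f) (1 / (n + 1 : ℝ)) hεpos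
      simpa [dist_eq_norm] using this
    obtain ⟨C, hC, hCsub⟩ := mem_cocompact.mp hev
    set Kn := {x : ↥U | 1 / (n + 1 : ℝ) ≤ ‖f x‖} with hKn
    have hKncl : IsClosed Kn := isClosed_le continuous_const (map_continuous f).norm
    have hKnc : IsCompact Kn := hC.of_isClosed_subset hKncl (by
      intro x hx
      by_contra hxC
      have h1 : ‖f x‖ < 1 / (n + 1 : ℝ) := hCsub hxC
      have h2 : 1 / (n + 1 : ℝ) ≤ ‖f x‖ := hx
      linarith)
    obtain ⟨φ, hφ1, -, hφcp, hφmem⟩ :=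
      exists_continuous_one_zero_of_isCompact hKnc isClosed_empty (Set.disjoint_empty _)
    set g := f.mulReal φ
      (fun x => abs_le.mpr ⟨by linarith [(hφmem x).1], (hφmem x).2⟩) with hg
    have hcs := cs g (Subtype.val '' tsupport φ) (hφcp.image continuous_subtype_val)
      (by rintro _ ⟨y, -, rfl⟩; exact y.2)
      (by
        intro x hx
        refine ⟨x, ?_, rfl⟩
        apply subset_tsupport φ
        intro hsupp0
        apply hx
        simp [hg, hsupp0])
    refine ⟨g, hcs, ?_⟩
    rw [← ZeroAtInftyContinuousMap.norm_toBCF_eq_norm]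
    refine (BoundedContinuousFunction.norm_le hεpos.le).mpr fun x => ?_
    have hfg : (f - g).toBCF x = f x * (1 - (φ x : ℂ)) := by
      simp [hg]
      ring
    rw [hfg]
    by_cases hx : x ∈ Kn
    · have h1 : φ x = 1 := hφ1 hx
      simp only [h1, Complex.ofReal_one, sub_self, mul_zero, norm_zero]
      positivity
    · have hfx : ‖f x‖ ≤ 1 / (n + 1 : ℝ) := le_of_lt (lt_of_not_ge hx)
      have h2 : ‖(1 : ℂ) - (φ x : ℂ)‖ ≤ 1 := by
        rw [show (1 : ℂ) - (φ x : ℂ) = ((1 - φ x : ℝ) : ℂ) by push_cast; ring,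
          Complex.norm_real]
        rw [Real.norm_eq_abs]
        exact abs_le.mpr ⟨by linarith [(hφmem x).2], by linarith [(hφmem x).1]⟩
      calc ‖f x * (1 - (φ x : ℂ))‖ = ‖f x‖ * ‖(1 : ℂ) - (φ x : ℂ)‖ := norm_mul _ _
        _ ≤ ‖f x‖ * 1 := by
            exact mul_le_mul_of_nonneg_left h2 (norm_nonneg _)
        _ ≤ 1 / (n + 1 : ℝ) := by rw [mul_one]; exact hfx
  choose g hg hgnorm using approx
  have hTnorm : Tendsto (fun n : ℕ => ‖T‖ * (1 / (n + 1 : ℝ))) atTop (𝓝 0) := by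
    have := tendsto_one_div_add_atTop_nhds_zero_nat.const_mul ‖T‖
    simpa using this
  constructor
  · refine isCompactOperator_of_tendsto (l := atTop) (F := fun k => T * ρU (g k)) ?_
      (Eventually.of_forall fun k => (hg k).1)
    rw [tendsto_iff_norm_sub_tendsto_zero]
    refine squeeze_zero (fun k => norm_nonneg _) (fun k => ?_) hTnorm
    calc ‖T * ρU (g k) - T * ρU f‖ = ‖T * ρU (g k - f)‖ := by rw [← mul_sub, ← map_sub]
      _ ≤ ‖T‖ * ‖ρU (g k - f)‖ := norm_mul_le _ _
      _ ≤ ‖T‖ * ‖g k - f‖ := by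
          exact mul_le_mul_of_nonneg_left (NonUnitalStarAlgHom.norm_apply_le ρU _)
            (norm_nonneg _)
      _ ≤ ‖T‖ * (1 / (k + 1 : ℝ)) := by
          rw [norm_sub_rev]
          exact mul_le_mul_of_nonneg_left (hgnorm k) (norm_nonneg _)
  · refine isCompactOperator_of_tendsto (l := atTop) (F := fun k => ρU (g k) * T) ?_
      (Eventually.of_forall fun k => (hg k).2)
    rw [tendsto_iff_norm_sub_tendsto_zero]
    refine squeeze_zero (fun k => norm_nonneg _) (fun k => ?_) hTnorm
    calc ‖ρU (g k) * T - ρU f * T‖ = ‖ρU (g k - f) * T‖ := by rw [← sub_mul, ← map_sub]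
      _ ≤ ‖ρU (g k - f)‖ * ‖T‖ := norm_mul_le _ _
      _ ≤ ‖g k - f‖ * ‖T‖ := by
          exact mul_le_mul_of_nonneg_right (NonUnitalStarAlgHom.norm_apply_le ρU _)
            (norm_nonneg _)
      _ ≤ ‖T‖ * (1 / (k + 1 : ℝ)) := by
          rw [norm_sub_rev, mul_comm]
          exact mul_le_mul_of_nonneg_left (hgnorm k) (norm_nonneg _)
end

section
/- Let X be a locally compact metrizable topological space, H an X-module, Z ⊆ X a closed subset, and U = X ∖ Z. For every pseudolocal operator T ∈ 𝔇(X;H), the restriction r_{U,X}(T) = P_U T P_U belongs to 𝔠(U) if and only if ρ(f)T and Tρ(f) are compact for every f ∈ C₀(X) that vanishes on Z; that is, the kernel of the restriction map from 𝔇(X;H) to 𝔇(U) modulo 𝔠(U) is exactly the ideal 𝔇_X(Z) of pseudolocal operators that are locally compact away from Z. -/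
open TopologicalSpace

/-- For a closed subset `Z ⊆ X` and `U = X ∖ Z`, the restriction `P_U T P_U` of a
pseudolocal operator `T` is locally compact on the `U`-module `P_U H` if and only if
`ρ(f) T` and `T ρ(f)` are compact for every `f ∈ C₀(X)` vanishing on `Z`; that is, the
kernel of the restriction map `𝔇(X;H) → 𝔇(U)/𝔠(U)` is exactly the ideal `𝔇_X(Z)` of
pseudolocal operators that are locally compact away from `Z`. -/
theorem symbol_restriction_kernel_eq_relative_ideal
    {X : Type} [TopologicalSpace X] [LocallyCompactSpace X] [MetrizableSpace X]
    {H : Type} [NormedAddCommGroup H] [InnerProductSpace ℂ H] [CompleteSpace H]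
    (ρ : ZeroAtInftyContinuousMap X ℂ →⋆ₙₐ[ℂ] (H →L[ℂ] H))
    -- extension by zero `i_V : C₀(V) → C₀(X)` for each open `V ⊆ X`
    (ι : ∀ V : Opens X, ZeroAtInftyContinuousMap (↥V) ℂ →⋆ₙₐ[ℂ] ZeroAtInftyContinuousMap X ℂ)
    (hι_mem : ∀ (V : Opens X) (f : ZeroAtInftyContinuousMap (↥V) ℂ) (x : ↥V), ι V f ↑x = f x)
    (hι_nmem : ∀ (V : Opens X) (f : ZeroAtInftyContinuousMap (↥V) ℂ) (x : X), x ∉ V → ι V f x = 0)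
    -- `P V` is the orthogonal projection onto the closed span of `{ρ(i_V f) ξ}`
    (P : ∀ V : Opens X, H →L[ℂ] H)
    (hPsa : ∀ V, IsSelfAdjoint (P V)) (hPidem : ∀ V, P V * P V = P V)
    (hPrange : ∀ V : Opens X, LinearMap.range (P V : H →ₗ[ℂ] H) =
      (Submodule.span ℂ {v : H | ∃ (f : ZeroAtInftyContinuousMap (↥V) ℂ) (ξ : H),
        ρ (ι V f) ξ = v}).topologicalClosure)
    -- the statement
    (Z : Set X) (hZ : IsClosed Z) (U : Opens X) (hU : (U : Set X) = Zᶜ)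
    (T : H →L[ℂ] H) (hT : IsPseudolocal ρ T) :
    IsLocallyCompactOp (ρ.comp (ι U)) (P U * T * P U) ↔
      ∀ f : ZeroAtInftyContinuousMap X ℂ, (∀ z ∈ Z, f z = 0) →
        IsCompactOperator ⇑(ρ f * T) ∧ IsCompactOperator ⇑(T * ρ f) := by
  classical
  -- `P U` acts as the identity on the range of `ρ (ι U g)`
  have hPρ : ∀ g : ZeroAtInftyContinuousMap (↥U) ℂ, P U * ρ (ι U g) = ρ (ι U g) := by
    intro g
    ext ξ
    have hmem : ρ (ι U g) ξ ∈ LinearMap.range (P U : H →ₗ[ℂ] H) := by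
      rw [hPrange U]
      exact Submodule.le_topologicalClosure _ (Submodule.subset_span ⟨g, ξ, rfl⟩)
    obtain ⟨w, hw⟩ := hmem
    simp only [ContinuousLinearMap.coe_coe] at hw
    have hid := DFunLike.congr_fun (hPidem U) w
    simp only [ContinuousLinearMap.mul_apply] at hid ⊢
    rw [← hw, hid]
  have hρP : ∀ g : ZeroAtInftyContinuousMap (↥U) ℂ, ρ (ι U g) * P U = ρ (ι U g) := by
    intro g
    have h1 : star (ρ (ι U g) * P U) = star (ρ (ι U g)) := by
      rw [star_mul, (hPsa U).star_eq, ← map_star ρ, ← map_star (ι U)]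
      exact hPρ (star g)
    calc ρ (ι U g) * P U = star (star (ρ (ι U g) * P U)) := (star_star _).symm
      _ = star (star (ρ (ι U g))) := by rw [h1]
      _ = ρ (ι U g) := star_star _
  constructor
  · -- restriction locally compact ⟹ locally compact away from Z
    intro h f hf
    -- restrict `f` to `U` as an element of `C₀(U)`
    have hgz : Filter.Tendsto (fun x : ↥U => f ↑x) (Filter.cocompact ↥U) (nhds 0) := by
      rw [Metric.tendsto_nhds]
      intro ε hε
      have hS : IsCompact {x : X | ε ≤ ‖f x‖} := by
        obtain ⟨K, hK, hKsub⟩ :=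
          Filter.mem_cocompact'.mp (Metric.tendsto_nhds.mp f.zero_at_infty' ε hε)
        refine hK.of_isClosed_subset (isClosed_le continuous_const f.continuous.norm) ?_
        intro x hx
        apply hKsub
        simp only [Set.mem_compl_iff, Set.mem_setOf_eq, not_lt, dist_zero_right]
        exact hx
      have hsub : {x : X | ε ≤ ‖f x‖} ⊆ (U : Set X) := by
        intro x hx
        rw [hU]
        intro hz
        simp only [Set.mem_setOf_eq] at hx
        rw [hf x hz] at hx
        simp only [norm_zero] at hx
        linarith
      have hS' : IsCompact ((↑) ⁻¹' {x : X | ε ≤ ‖f x‖} : Set ↥U) := by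
        rw [Topology.IsEmbedding.subtypeVal.isCompact_iff]
        rwa [Set.image_preimage_eq_inter_range, Subtype.range_coe,
          Set.inter_eq_left.mpr hsub]
      rw [Filter.eventually_iff, Filter.mem_cocompact]
      refine ⟨_, hS', fun x hx => ?_⟩
      simp only [Set.mem_compl_iff, Set.mem_preimage, Set.mem_setOf_eq, not_le] at hx
      simpa [dist_zero_right] using hx
    set g : ZeroAtInftyContinuousMap (↥U) ℂ :=
      ⟨⟨fun x => f ↑x, f.continuous.comp continuous_subtype_val⟩, hgz⟩ with hgdef
    have hg : ι U g = f := by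
      ext x
      by_cases hx : x ∈ U
      · exact hι_mem U g ⟨x, hx⟩
      · have hz : x ∈ Z := by
          by_contra hz
          exact hx (show x ∈ U from by rw [← SetLike.mem_coe, hU]; exact hz)
        rw [hι_nmem U g x hx, hf x hz]
    have e1 : ρ f * P U = ρ f := by rw [← hg]; exact hρP g
    have e2 : P U * ρ f = ρ f := by rw [← hg]; exact hPρ g
    have hρcomp : (ρ.comp (ι U)) g = ρ f := by
      rw [NonUnitalStarAlgHom.comp_apply, hg]
    have hc1 : IsCompactOperator ⇑(ρ f * (P U * T * P U)) := by
      have h2 := (h g).2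
      rwa [hρcomp] at h2
    have hc2 : IsCompactOperator ⇑((P U * T * P U) * ρ f) := by
      have h1 := (h g).1
      rwa [hρcomp] at h1
    have hd : IsCompactOperator ⇑(ρ f * T - T * ρ f) := by
      rw [show ρ f * T - T * ρ f = -(T * ρ f - ρ f * T) from (neg_sub _ _).symm]
      simpa using (hT f).neg
    have hd' : IsCompactOperator ⇑(T * ρ f - ρ f * T) := hT f
    constructor
    · have key : ρ f * T = ρ f * (P U * T * P U) +
          ((ρ f * T - T * ρ f) - (ρ f * T - T * ρ f) * P U) := by
        have k1 : ρ f * (P U * T * P U) = ρ f * T * P U := by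
          rw [← mul_assoc, ← mul_assoc, e1]
        have k2 : (ρ f * T - T * ρ f) * P U = ρ f * T * P U - T * ρ f := by
          rw [sub_mul, mul_assoc T, e1]
        rw [k1, k2]; abel
      rw [key]
      exact hc1.add (hd.sub (hd.comp_clm (P U)))
    · have key2 : T * ρ f = (P U * T * P U) * ρ f +
          ((T * ρ f - ρ f * T) - P U * (T * ρ f - ρ f * T)) := by
        have k1 : P U * T * P U * ρ f = P U * (T * ρ f) := by
          rw [mul_assoc (P U * T), e2, mul_assoc]
        have k2 : P U * (T * ρ f - ρ f * T) = P U * (T * ρ f) - ρ f * T := by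
          rw [mul_sub, ← mul_assoc (P U) (ρ f) T, e2]
        rw [k1, k2]; abel
      rw [key2]
      exact hc2.add (hd'.sub (hd'.clm_comp (P U)))
  · -- locally compact away from Z ⟹ restriction locally compact
    intro h g
    have hf : ∀ z ∈ Z, (ι U g) z = 0 := by
      intro z hz
      refine hι_nmem U g z ?_
      intro hzU
      rw [← SetLike.mem_coe, hU] at hzU
      exact hzU hz
    obtain ⟨hc1, hc2⟩ := h (ι U g) hf
    have hρcomp : (ρ.comp (ι U)) g = ρ (ι U g) := NonUnitalStarAlgHom.comp_apply _ _ _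
    constructor
    · have : P U * T * P U * (ρ.comp (ι U)) g = P U * (T * ρ (ι U g)) := by
        rw [hρcomp, mul_assoc (P U * T), hPρ g, mul_assoc]
      rw [this]
      exact hc2.clm_comp (P U)
    · have : (ρ.comp (ι U)) g * (P U * T * P U) = ρ (ι U g) * T * P U := by
        rw [hρcomp, ← mul_assoc, ← mul_assoc, hρP g]
      rw [this]
      exact hc1.comp_clm (P U)
end
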